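/- Under Algorithm 1, from configuration Conf RW-MB the execution achieves gathering: all robots eventually occupy a single node and remain there forever. -/

import Mathlib

set_option autoImplicit false

/-! ### Luminous myopic robots on an anonymous ring: basic model -/

/-- A configuration of `R` luminous robots with light colors in `C`
on an anonymous ring with `N` nodes (the nodes are `ZMod N`). -/
structure Config (N R : ℕ) (C : Type) where
  pos : Fin R → ZMod N
  light : Fin R → C

namespace Gathering

variable {N R : ℕ} {C : Type}

/-- The set of light colors present at node `u`. -/
def colorsAt (cfg : Config N R C) (u : ZMod N) : Set C :=
  {c | ∃ r, cfg.pos r = u ∧ cfg.light r = c}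

/-- Node `u` hosts at least one robot. -/
def occupiedNode (cfg : Config N R C) (u : ZMod N) : Prop :=
  ∃ r, cfg.pos r = u

/-- The view from node `u` with visibility range `φ`, in orientation `dir`:
the set of colors at signed offset `k`, for `|k| ≤ φ` (and `∅` beyond the range). -/
def nodeView (φ : ℕ) (cfg : Config N R C) (u : ZMod N) (dir : Bool) : ℤ → Set C :=
  fun k => if |k| ≤ (φ : ℤ) then
      colorsAt cfg (u + (if dir then (k : ZMod N) else ((-k : ℤ) : ZMod N)))
    else ∅

/-- Node `u` is a border node: it is occupied, all `φ` nodes on one side are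
empty, and some node within distance `φ` on the other side is occupied. -/
def isBorderNode (φ : ℕ) (cfg : Config N R C) (u : ZMod N) : Prop :=
  occupiedNode cfg u ∧
  ∃ dir : Bool,
    (∀ k : ℤ, 1 ≤ k → k ≤ (φ : ℤ) →
      ¬ occupiedNode cfg (u + (if dir then (k : ZMod N) else ((-k : ℤ) : ZMod N)))) ∧
    (∃ k : ℤ, 1 ≤ k ∧ k ≤ (φ : ℤ) ∧
      occupiedNode cfg (u + (if dir then ((-k : ℤ) : ZMod N) else (k : ZMod N))))

/-- Robot `r` is a border robot. -/
def isBorderRobot (φ : ℕ) (cfg : Config N R C) (r : Fin R) : Prop :=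
  isBorderNode φ cfg (cfg.pos r)

/-- The borders of a configuration: an occupied node together with a direction
in which the next `φ` nodes are all empty (their number is always even). -/
def borderPairs (φ : ℕ) (cfg : Config N R C) : Set (ZMod N × Bool) :=
  {p | occupiedNode cfg p.1 ∧
    ∀ k : ℤ, 1 ≤ k → k ≤ (φ : ℤ) →
      ¬ occupiedNode cfg (p.1 + (if p.2 then (k : ZMod N) else ((-k : ℤ) : ZMod N)))}

/-- Ring distance between two nodes. -/
def ringDist (u v : ZMod N) : ℕ := min (u - v).val (v - u).val

/-- Robots `r` and `r'` can observe each other. -/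
def canSee (φ : ℕ) (cfg : Config N R C) (r r' : Fin R) : Prop :=
  ringDist (cfg.pos r) (cfg.pos r') ≤ φ

/-- The visibility graph of the configuration is connected. -/
def VisConnected (φ : ℕ) (cfg : Config N R C) : Prop :=
  ∀ r r' : Fin R, Relation.ReflTransGen (canSee φ cfg) r r'

/-- The span of a configuration: the least `m` such that all occupied nodes fit
in a window of `m + 1` consecutive nodes.  In a configuration with exactly two
borders this is the distance `D` between the two border nodes. -/
noncomputable def spanDist (cfg : Config N R C) : ℕ :=
  sInf {m : ℕ | ∃ b : ZMod N, ∀ u, occupiedNode cfg u → ∃ i : ℕ, i ≤ m ∧ u = b + (i : ZMod N)}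

/-! ### Algorithms and asynchronous executions -/

/-- A deterministic algorithm for luminous robots in the full-light model:
given the robot's own color and its (oriented) view, output a new color and a
movement (`+1`, `0` or `-1`, relative to the orientation of the view). -/
structure Algo (C : Type) where
  out : C → (ℤ → Set C) → C × SignType

/-- The destination of a movement `m` from node `u`, for view orientation `dir`. -/
def moveTarget (u : ZMod N) (dir : Bool) (m : SignType) : ZMod N :=
  u + (if dir then ((m : ℤ) : ZMod N) else ((-(m : ℤ) : ℤ) : ZMod N))

/-- An execution of algorithm `A` under a fair asynchronous scheduler.
At each instant every robot either stays idle, performs a Look (together with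
the deterministic Compute, recording a plan: a new color and a destination
node; the orientation of the snapshot is chosen adversarially, as robots are
disoriented), becomes visible with its new color (end of the Compute phase,
keeping its pending plan), or performs its atomic Move, completing the cycle.
A robot `r` with `plan t r ≠ none` is a robot whose view may be outdated. -/
structure AsyncExec (N R : ℕ) (C : Type) (φ : ℕ) (A : Algo C) where
  cfg : ℕ → Config N R C
  plan : ℕ → Fin R → Option (C × ZMod N)
  init_plan : ∀ r, plan 0 r = none
  step : ∀ (t : ℕ) (r : Fin R),
      ((cfg (t+1)).pos r = (cfg t).pos r ∧ (cfg (t+1)).light r = (cfg t).light r ∧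
        plan (t+1) r = plan t r)
    ∨ (plan t r = none ∧ (cfg (t+1)).pos r = (cfg t).pos r ∧
        (cfg (t+1)).light r = (cfg t).light r ∧
        ∃ dir : Bool,
          plan (t+1) r =
            some ((A.out ((cfg t).light r) (nodeView φ (cfg t) ((cfg t).pos r) dir)).1,
              moveTarget ((cfg t).pos r) dir
                (A.out ((cfg t).light r) (nodeView φ (cfg t) ((cfg t).pos r) dir)).2))
    ∨ (∃ c u, plan t r = some (c, u) ∧ (cfg (t+1)).pos r = (cfg t).pos r ∧
        (cfg (t+1)).light r = c ∧ plan (t+1) r = some (c, u))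
    ∨ (∃ c u, plan t r = some (c, u) ∧ (cfg (t+1)).pos r = u ∧
        (cfg (t+1)).light r = c ∧ plan (t+1) r = none)
  fair : ∀ (r : Fin R) (t : ℕ), ∃ t', t ≤ t' ∧ plan t' r ≠ none ∧ plan (t'+1) r = none

/-- The execution achieves gathering: from some time on, all robots occupy a
single node and remain there forever. -/
def AchievesGathering {N R : ℕ} {C : Type} {φ : ℕ} {A : Algo C}
    (e : AsyncExec N R C φ A) : Prop :=
  ∃ (t : ℕ) (u : ZMod N), ∀ t', t ≤ t' → ∀ r, (e.cfg t').pos r = u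

/-! ### Initial configurations -/

/-- The robots occupy a segment `G'` of `Minit` nodes with base (border) node
`b`: both endpoints of the segment are occupied and are borders (the `φ` nodes
beyond each endpoint are empty), every occupied node lies in the segment,
consecutive occupied nodes are at distance at most `φ` (`H_init ≤ φ`, i.e. the
visibility graph is connected), and `Oinit` is the number of occupied nodes of
the segment. -/
def SegmentInitOn (φ : ℕ) (cfg : Config N R C) (b : ZMod N) (Minit Oinit : ℕ) : Prop :=
  2 ≤ Minit ∧
  occupiedNode cfg b ∧ occupiedNode cfg (b + ((Minit - 1 : ℕ) : ZMod N)) ∧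
  (∀ u, occupiedNode cfg u → ∃ i : ℕ, i < Minit ∧ u = b + (i : ZMod N)) ∧
  (∀ k : ℕ, 1 ≤ k → k ≤ φ →
    ¬ occupiedNode cfg (b - (k : ZMod N)) ∧
    ¬ occupiedNode cfg (b + ((Minit - 1 : ℕ) : ZMod N) + (k : ZMod N))) ∧
  (∀ i : ℕ, i + 1 < Minit → occupiedNode cfg (b + (i : ZMod N)) →
    ∃ j : ℕ, i < j ∧ j ≤ i + φ ∧ j < Minit ∧ occupiedNode cfg (b + (j : ZMod N))) ∧
  Oinit = {i : Fin Minit | occupiedNode cfg (b + ((i : ℕ) : ZMod N))}.ncard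

/-- Admissible initial configuration: all robots have the color `white`, and
the robots occupy a segment with two borders and connected visibility graph. -/
def AdmissibleInit (φ : ℕ) (cfg : Config N R C) (white : C) (Minit Oinit : ℕ) : Prop :=
  (∀ r, cfg.light r = white) ∧ ∃ b : ZMod N, SegmentInitOn φ cfg b Minit Oinit

/-! ### Edge-view symmetry and cautiousness -/

/-- Robots `r1` and `r2` are indistinguishable: they have the same color and
the same view (up to reversal, as robots are disoriented). -/
def viewsEq (φ : ℕ) (cfg : Config N R C) (r1 r2 : Fin R) : Prop :=
  cfg.light r1 = cfg.light r2 ∧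
  (nodeView φ cfg (cfg.pos r1) true = nodeView φ cfg (cfg.pos r2) true ∨
   nodeView φ cfg (cfg.pos r1) true = nodeView φ cfg (cfg.pos r2) false)

/-- Definition 20: a configuration is edge-view-symmetric if at least two
distinct nodes host robots and there is an edge `(u_i, u_{i+1})` such that for
every `k ≥ 0`, every robot at `u_{i-k}` has an indistinguishable counterpart at
`u_{i+k+1}`. -/
def EdgeViewSymmetric (φ : ℕ) (cfg : Config N R C) : Prop :=
  (∃ u v : ZMod N, u ≠ v ∧ occupiedNode cfg u ∧ occupiedNode cfg v) ∧
  ∃ i : ZMod N, ∀ (k : ℕ) (r1 : Fin R), cfg.pos r1 = i - (k : ZMod N) →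
    ∃ r2 : Fin R, cfg.pos r2 = i + (k : ZMod N) + 1 ∧ viewsEq φ cfg r1 r2

/-- Definition 23: an algorithm is cautious if robots only ever move toward
other occupied nodes (they never expand the span of the visibility graph). -/
def Cautious (φ : ℕ) (A : Algo C) : Prop :=
  ∀ (c : C) (v : ℤ → Set C),
    ((A.out c v).2 = 1 → ∃ k : ℤ, 1 ≤ k ∧ k ≤ (φ : ℤ) ∧ v k ≠ ∅) ∧
    ((A.out c v).2 = -1 → ∃ k : ℤ, 1 ≤ k ∧ k ≤ (φ : ℤ) ∧ v (-k) ≠ ∅)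

end Gathering

namespace Gathering

/-! ### Algorithm 1 (three colors) -/

/-- The three light colors of Algorithm 1. -/
inductive C3 : Type
  | White
  | Red
  | Blue
deriving DecidableEq

open Classical in
/-- The rules of Algorithm 1, for a view oriented so that the `φ` nodes at
negative offsets are empty (the observing robot is a border robot and the
positive direction points inward), in priority order
R1, R2a, R2b, R3a, R3b, R4a, R4b, R5. -/
noncomputable def algo1Rules (φ : ℕ) (c : C3) (v : ℤ → Set C3) : C3 × SignType :=
  -- R1 : ∅^φ [W!] (¬∅^φ)  ::  R
  if c = C3.White ∧ v 0 = {C3.White} then (C3.Red, 0)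
  -- R2a : ∅^φ [R!] (∅, B!) (¬(∅^(φ-1)))  ::  B, →
  else if c = C3.Red ∧ v 0 = {C3.Red} ∧ (v 1 = ∅ ∨ v 1 = {C3.Blue}) ∧
      ¬ (∀ k : ℤ, 2 ≤ k → k ≤ (φ : ℤ) → v k = ∅) then (C3.Blue, 1)
  -- R2b : ∅^φ [R!] (W) (?^(φ-1))  ::  B, →
  else if c = C3.Red ∧ v 0 = {C3.Red} ∧ C3.White ∈ v 1 ∧
      (∀ k : ℤ, 2 ≤ k → k ≤ (φ : ℤ) → v k ≠ ∅) then (C3.Blue, 1)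
  -- R3a : ∅^φ [B!] (∅, R!) (¬(∅^(φ-1)))  ::  R, →
  else if c = C3.Blue ∧ v 0 = {C3.Blue} ∧ (v 1 = ∅ ∨ v 1 = {C3.Red}) ∧
      ¬ (∀ k : ℤ, 2 ≤ k → k ≤ (φ : ℤ) → v k = ∅) then (C3.Red, 1)
  -- R3b : ∅^φ [B!] (W) (?^(φ-1))  ::  R, →
  else if c = C3.Blue ∧ v 0 = {C3.Blue} ∧ C3.White ∈ v 1 ∧
      (∀ k : ℤ, 2 ≤ k → k ≤ (φ : ℤ) → v k ≠ ∅) then (C3.Red, 1)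
  -- R4a : ∅^φ [R [W]] (¬∅^φ)  ::  R
  else if c = C3.White ∧ C3.Red ∈ v 0 then (C3.Red, 0)
  -- R4b : ∅^φ [B [W]] (¬∅^φ)  ::  B
  else if c = C3.White ∧ C3.Blue ∈ v 0 then (C3.Blue, 0)
  -- R5 : ∅^φ [R!] (B!) (∅^(φ-1))  ::  B, →
  else if c = C3.Red ∧ v 0 = {C3.Red} ∧ v 1 = {C3.Blue} ∧
      (∀ k : ℤ, 2 ≤ k → k ≤ (φ : ℤ) → v k = ∅) then (C3.Blue, 1)
  else (c, 0)

open Classical in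
/-- Algorithm 1: the rules are applied in the orientation in which the `φ`
nearest nodes on one side are all empty.  A robot seeing no other robot does
nothing (rule R0), and no rule is enabled for a non-border robot. -/
noncomputable def algo1 (φ : ℕ) : Algo C3 where
  out := fun c v =>
    if (∀ k : ℤ, 1 ≤ k → k ≤ (φ : ℤ) → v (-k) = ∅) ∧
       (∀ k : ℤ, 1 ≤ k → k ≤ (φ : ℤ) → v k = ∅) then (c, 0)
    else if ∀ k : ℤ, 1 ≤ k → k ≤ (φ : ℤ) → v (-k) = ∅ then algo1Rules φ c v
    else if ∀ k : ℤ, 1 ≤ k → k ≤ (φ : ℤ) → v k = ∅ then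
      ((algo1Rules φ c (fun k => v (-k))).1, -(algo1Rules φ c (fun k => v (-k))).2)
    else (c, 0)

/-! ### Algorithm 2 (four colors) -/

/-- The four light colors of Algorithm 2. -/
inductive C4 : Type
  | White
  | Red
  | Blue
  | Purple
deriving DecidableEq

open Classical in
/-- The rules of Algorithm 2, for a view oriented so that the `φ` nodes at
negative offsets are empty, in priority order
R1, R2a-1, R2a-2, R2b, R3a-1, R3a-2, R3b, R4a, R4b, R5a, R5b-1, R5b-2, R5b-3. -/
noncomputable def algo2Rules (φ : ℕ) (c : C4) (v : ℤ → Set C4) : C4 × SignType :=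
  -- R1 : ∅^φ [W!] (¬∅^φ)  ::  R
  if c = C4.White ∧ v 0 = {C4.White} then (C4.Red, 0)
  -- R2a-1 : ∅^φ [R!] (∅) (¬(∅^(φ-1)))  ::  →
  else if c = C4.Red ∧ v 0 = {C4.Red} ∧ v 1 = ∅ ∧
      ¬ (∀ k : ℤ, 2 ≤ k → k ≤ (φ : ℤ) → v k = ∅) then (C4.Red, 1)
  -- R2a-2 : ∅^φ [R!] (¬W, R) (¬(∅^(φ-1)))  ::  →
  else if c = C4.Red ∧ v 0 = {C4.Red} ∧ (C4.Red ∈ v 1 ∧ C4.White ∉ v 1) ∧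
      ¬ (∀ k : ℤ, 2 ≤ k → k ≤ (φ : ℤ) → v k = ∅) then (C4.Red, 1)
  -- R2b : ∅^φ [R!] (W) (?^(φ-1))  ::  B, →
  else if c = C4.Red ∧ v 0 = {C4.Red} ∧ C4.White ∈ v 1 ∧
      (∀ k : ℤ, 2 ≤ k → k ≤ (φ : ℤ) → v k ≠ ∅) then (C4.Blue, 1)
  -- R3a-1 : ∅^φ [B!] (∅) (¬(∅^(φ-1)))  ::  →
  else if c = C4.Blue ∧ v 0 = {C4.Blue} ∧ v 1 = ∅ ∧
      ¬ (∀ k : ℤ, 2 ≤ k → k ≤ (φ : ℤ) → v k = ∅) then (C4.Blue, 1)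
  -- R3a-2 : ∅^φ [B!] (¬W, B) (¬(∅^(φ-1)))  ::  →
  else if c = C4.Blue ∧ v 0 = {C4.Blue} ∧ (C4.Blue ∈ v 1 ∧ C4.White ∉ v 1) ∧
      ¬ (∀ k : ℤ, 2 ≤ k → k ≤ (φ : ℤ) → v k = ∅) then (C4.Blue, 1)
  -- R3b : ∅^φ [B!] (W) (?^(φ-1))  ::  R, →
  else if c = C4.Blue ∧ v 0 = {C4.Blue} ∧ C4.White ∈ v 1 ∧
      (∀ k : ℤ, 2 ≤ k → k ≤ (φ : ℤ) → v k ≠ ∅) then (C4.Red, 1)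
  -- R4a : ∅^φ [R [W]] (¬∅^φ)  ::  R
  else if c = C4.White ∧ C4.Red ∈ v 0 then (C4.Red, 0)
  -- R4b : ∅^φ [B [W]] (¬∅^φ)  ::  B
  else if c = C4.White ∧ C4.Blue ∈ v 0 then (C4.Blue, 0)
  -- R5a : ∅^φ [?] (P) (∅^(φ-1))  ::  →
  else if C4.Purple ∈ v 1 ∧ (∀ k : ℤ, 2 ≤ k → k ≤ (φ : ℤ) → v k = ∅) then (c, 1)
  -- R5b-1 : ∅^φ [B!] (R!) (∅^(φ-1))  ::  P
  else if c = C4.Blue ∧ v 0 = {C4.Blue} ∧ v 1 = {C4.Red} ∧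
      (∀ k : ℤ, 2 ≤ k → k ≤ (φ : ℤ) → v k = ∅) then (C4.Purple, 0)
  -- R5b-2 : ∅^φ [B!] (R, B) (∅^(φ-1))  ::  P
  else if c = C4.Blue ∧ v 0 = {C4.Blue} ∧ (C4.Red ∈ v 1 ∧ C4.Blue ∈ v 1) ∧
      (∀ k : ℤ, 2 ≤ k → k ≤ (φ : ℤ) → v k = ∅) then (C4.Purple, 0)
  -- R5b-3 : ∅^φ [R [B]] (R!) (∅^(φ-1))  ::  P
  else if c = C4.Blue ∧ C4.Red ∈ v 0 ∧ v 1 = {C4.Red} ∧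
      (∀ k : ℤ, 2 ≤ k → k ≤ (φ : ℤ) → v k = ∅) then (C4.Purple, 0)
  else (c, 0)

open Classical in
/-- Algorithm 2: the rules are applied in the orientation in which the `φ`
nearest nodes on one side are all empty.  A robot seeing no other robot does
nothing (rule R0), and no rule is enabled for a non-border robot. -/
noncomputable def algo2 (φ : ℕ) : Algo C4 where
  out := fun c v =>
    if (∀ k : ℤ, 1 ≤ k → k ≤ (φ : ℤ) → v (-k) = ∅) ∧
       (∀ k : ℤ, 1 ≤ k → k ≤ (φ : ℤ) → v k = ∅) then (c, 0)
    else if ∀ k : ℤ, 1 ≤ k → k ≤ (φ : ℤ) → v (-k) = ∅ then algo2Rules φ c v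
    else if ∀ k : ℤ, 1 ≤ k → k ≤ (φ : ℤ) → v k = ∅ then
      ((algo2Rules φ c (fun k => v (-k))).1, -(algo2Rules φ c (fun k => v (-k))).2)
    else (c, 0)

/-- `#O_W`: the number of nodes hosting a White robot that are not border
nodes. -/
noncomputable def numWhiteNonBorder {N R : ℕ} (φ : ℕ) (cfg : Config N R C4) : ℕ :=
  {u : ZMod N | C4.White ∈ colorsAt cfg u ∧ ¬ isBorderNode φ cfg u}.ncard

end Gathering

namespace Gathering

/-- Configuration `Conf BW-MR` (with `D = 1`): one border node `u` contains
Blue robots and possibly White robots, all without outdated views; the other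
border node `v` contains Red robots and possibly Blue robots, where a robot of
`v` either has no outdated view (and is then Red) or has a pending plan to
change its color to Blue and move to `u`. -/
def ConfBWMR {N R φ : ℕ} {A : Algo C3} (e : AsyncExec N R C3 φ A) (t : ℕ) : Prop :=
  ∃ u v : ZMod N, (v = u + 1 ∨ v = u - 1) ∧
    isBorderNode φ (e.cfg t) u ∧ isBorderNode φ (e.cfg t) v ∧
    (∀ w, occupiedNode (e.cfg t) w → w = u ∨ w = v) ∧
    (∀ r, (e.cfg t).pos r = u →
      ((e.cfg t).light r = C3.Blue ∨ (e.cfg t).light r = C3.White) ∧ e.plan t r = none) ∧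
    C3.Blue ∈ colorsAt (e.cfg t) u ∧
    (∀ r, (e.cfg t).pos r = v →
      ((e.cfg t).light r = C3.Red ∨ (e.cfg t).light r = C3.Blue) ∧
      (e.plan t r = none ∨ e.plan t r = some (C3.Blue, u)) ∧
      (e.plan t r = none → (e.cfg t).light r = C3.Red)) ∧
    C3.Red ∈ colorsAt (e.cfg t) v

/-- Configuration `Conf RW-MB` (with `D = 1`): one border node `u` contains
Red robots and possibly White robots, all without outdated views; the other
border node `v` contains Blue robots and possibly Red robots, where a robot of
`v` either has no outdated view (and is then Blue) or has a pending plan to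
change its color to Red and move to `u`. -/
def ConfRWMB {N R φ : ℕ} {A : Algo C3} (e : AsyncExec N R C3 φ A) (t : ℕ) : Prop :=
  ∃ u v : ZMod N, (v = u + 1 ∨ v = u - 1) ∧
    isBorderNode φ (e.cfg t) u ∧ isBorderNode φ (e.cfg t) v ∧
    (∀ w, occupiedNode (e.cfg t) w → w = u ∨ w = v) ∧
    (∀ r, (e.cfg t).pos r = u →
      ((e.cfg t).light r = C3.Red ∨ (e.cfg t).light r = C3.White) ∧ e.plan t r = none) ∧
    C3.Red ∈ colorsAt (e.cfg t) u ∧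
    (∀ r, (e.cfg t).pos r = v →
      ((e.cfg t).light r = C3.Red ∨ (e.cfg t).light r = C3.Blue) ∧
      (e.plan t r = none ∨ e.plan t r = some (C3.Red, u)) ∧
      (e.plan t r = none → (e.cfg t).light r = C3.Blue)) ∧
    C3.Blue ∈ colorsAt (e.cfg t) v

end Gathering

/-!
From `Conf RW-MB` the robots never leave the two adjacent border nodes `u` and `v`, and every
robot stays in one of a few states (`IsRWMBState`): on `u` it is White or Red, or Blue while
performing an R5 move to `v`; on `v` it is Blue or has an outdated plan to turn Red and move to
`u`. Each "eventually" below holds because a decreasing sequence of sets of robots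
stabilises.

* No robot turns White, and a White robot turns Red at its next Look, unless `v` is empty at
  that moment; then everybody is on `u` with no move towards `v` pending, and stays there.
* Without White robots, no new outdated plan appears on `v`, and the pending ones get executed.
* From then on nobody enters `u`, so the set of robots on `u` stabilises. If it is empty, all
  robots stay on `v`. Otherwise none of them performs R5, so they are all Red; a Look by one of
  them while `v` hosts (necessarily Blue) robots would trigger R5, hence `v` is empty at that
  Look and all robots stay on `u`.
-/

namespace Gathering

section Views

variable {N R : ℕ} {C : Type}

lemma intCast_eq_intCast_iff_of_abs_sub_lt {a b : ℤ} (h : |a - b| < N) :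
    (a : ZMod N) = b ↔ a = b := by
  rw [ZMod.intCast_eq_intCast_iff_dvd_sub]
  refine ⟨fun hdvd => ?_, fun hab => by simp [hab]⟩
  have := Int.eq_zero_of_abs_lt_dvd hdvd (by rwa [abs_sub_comm])
  omega

lemma colorsAt_eq_empty {cfg : Config N R C} {z : ZMod N} :
    colorsAt cfg z = ∅ ↔ ¬ occupiedNode cfg z := by
  simp [Set.eq_empty_iff_forall_notMem, colorsAt, occupiedNode]

lemma colorsAt_ne_empty {cfg : Config N R C} {z : ZMod N} (hz : occupiedNode cfg z) :
    colorsAt cfg z ≠ ∅ :=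
  fun h => colorsAt_eq_empty.mp h hz

def dirUnit (dir : Bool) : ZMod N := if dir then 1 else -1

lemma add_intCast_mul_dirUnit_inj {x : ZMod N} {a b : ℤ} (h : |a - b| < N) (dir : Bool) :
    x + (a : ZMod N) * dirUnit dir = x + (b : ZMod N) * dirUnit dir ↔ a = b := by
  rw [add_right_inj, ← intCast_eq_intCast_iff_of_abs_sub_lt h]
  cases dir <;> simp [dirUnit]

lemma nodeView_eq_ite (φ : ℕ) (cfg : Config N R C) (x : ZMod N) (dir : Bool) (k : ℤ) :
    nodeView φ cfg x dir k =
      if |k| ≤ (φ : ℤ) then colorsAt cfg (x + (k : ZMod N) * dirUnit dir) else ∅ := by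
  cases dir <;> simp [nodeView, dirUnit]

lemma moveTarget_eq (x : ZMod N) (dir : Bool) (m : SignType) :
    moveTarget x dir m = x + ((m : ℤ) : ZMod N) * dirUnit dir := by
  cases dir <;> simp [moveTarget, dirUnit]

lemma nodeView_false (φ : ℕ) (cfg : Config N R C) (x : ZMod N) :
    nodeView φ cfg x false = fun k => nodeView φ cfg x true (-k) := by
  funext k
  simp [nodeView, abs_neg]

lemma moveTarget_false (x : ZMod N) (m : SignType) :
    moveTarget x false m = moveTarget x true (-m) := by
  simp [moveTarget, SignType.coe_neg]

/-- The view of a robot at `x` when only `x` (colors `S`) and the next node in the view's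
orientation (colors `T`) can be occupied. -/
def adjView (S T : Set C) : ℤ → Set C :=
  fun k => if k = 0 then S else if k = 1 then T else ∅

lemma nodeView_eq_adjView {φ : ℕ} (hφ : 1 ≤ φ) (hφN : φ + 2 ≤ N) {cfg : Config N R C}
    {x : ZMod N} (dir : Bool) (hocc : ∀ z, occupiedNode cfg z → z = x ∨ z = x + dirUnit dir) :
    nodeView φ cfg x dir = adjView (colorsAt cfg x) (colorsAt cfg (x + dirUnit dir)) := by
  funext k
  rw [nodeView_eq_ite]
  unfold adjView
  by_cases hk : |k| ≤ (φ : ℤ)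
  · have hk' := abs_le.mp hk
    rw [if_pos hk]
    split_ifs with h0 h1
    · simp [h0]
    · simp [h1]
    rw [colorsAt_eq_empty]
    intro hz
    rcases hocc _ hz with h | h
    · exact h0 ((add_intCast_mul_dirUnit_inj (x := x) (b := 0) (by rw [abs_lt]; omega) dir).mp
        (by simpa using h))
    · exact h1 ((add_intCast_mul_dirUnit_inj (x := x) (b := 1) (by rw [abs_lt]; omega) dir).mp
        (by simpa using h))
  · rw [if_neg hk]
    have : k ≠ 0 ∧ k ≠ 1 := by rw [abs_le] at hk; omega
    simp [this]

/-- The plan `(new light, destination)` that `AsyncExec.step` records for a Look. -/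
def lookResult (A : Algo C) (φ : ℕ) (cfg : Config N R C) (r : Fin R) (dir : Bool) :
    C × ZMod N :=
  ((A.out (cfg.light r) (nodeView φ cfg (cfg.pos r) dir)).1,
    moveTarget (cfg.pos r) dir (A.out (cfg.light r) (nodeView φ cfg (cfg.pos r) dir)).2)

lemma colorsAt_eq_singleton {cfg : Config N R C} {z : ZMod N} {c : C}
    (hz : occupiedNode cfg z) (hc : ∀ r, cfg.pos r = z → cfg.light r = c) :
    colorsAt cfg z = {c} := by
  obtain ⟨r₀, hr₀⟩ := hz
  ext c'
  exact ⟨fun ⟨r, hr, hl⟩ => hl ▸ hc r hr, fun h => ⟨r₀, hr₀, (hc r₀ hr₀).trans h.symm⟩⟩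

end Views

lemma exists_forall_ge_eq_of_succ_subset {α : Type*} [Finite α] {S : ℕ → Set α} {t₀ : ℕ}
    (h : ∀ t, t₀ ≤ t → S (t + 1) ⊆ S t) : ∃ T, t₀ ≤ T ∧ ∀ t, T ≤ t → S t = S T := by
  have hmono : Monotone fun n => OrderDual.toDual (S (t₀ + n)) :=
    monotone_nat_of_le_succ fun n => h (t₀ + n) (by omega)
  obtain ⟨n, hn⟩ := WellFoundedGT.monotone_chain_condition ⟨_, hmono⟩
  refine ⟨t₀ + n, by omega, fun t ht => ?_⟩
  obtain ⟨m, rfl⟩ := Nat.exists_eq_add_of_le ht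
  have := hn (n + m) (by omega)
  simp only [OrderHom.coe_mk, OrderDual.toDual_inj] at this
  rw [add_assoc, this]

namespace AsyncExec

variable {N R φ : ℕ} {C : Type} {A : Algo C} (e : AsyncExec N R C φ A)

lemma step_cases (t : ℕ) (r : Fin R) :
    ((e.cfg (t+1)).pos r = (e.cfg t).pos r ∧ (e.cfg (t+1)).light r = (e.cfg t).light r ∧
        e.plan (t+1) r = e.plan t r)
    ∨ (e.plan t r = none ∧ (e.cfg (t+1)).pos r = (e.cfg t).pos r ∧
        (e.cfg (t+1)).light r = (e.cfg t).light r ∧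
        ∃ dir, e.plan (t+1) r = some (lookResult A φ (e.cfg t) r dir))
    ∨ (∃ c w, e.plan t r = some (c, w) ∧ (e.cfg (t+1)).pos r = (e.cfg t).pos r ∧
        (e.cfg (t+1)).light r = c ∧ e.plan (t+1) r = some (c, w))
    ∨ (∃ c w, e.plan t r = some (c, w) ∧ (e.cfg (t+1)).pos r = w ∧
        (e.cfg (t+1)).light r = c ∧ e.plan (t+1) r = none) :=
  e.step t r

lemma plan_succ_or_move {t : ℕ} {r : Fin R} {c : C} {w : ZMod N}
    (h : e.plan t r = some (c, w)) :
    e.plan (t+1) r = some (c, w) ∨ (e.cfg (t+1)).pos r = w ∧ (e.cfg (t+1)).light r = c := by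
  rcases e.step_cases t r with ⟨-, -, h3⟩ | ⟨h0, -⟩ | ⟨c', w', h0, -, -, h3⟩ |
    ⟨c', w', h0, h1, h2, -⟩
  · exact .inl (h3.trans h)
  · simp [h0] at h
  · rw [h] at h0; cases h0; exact .inl h3
  · rw [h] at h0; cases h0; exact .inr ⟨h1, h2⟩

lemma exists_move {t : ℕ} {r : Fin R} {c : C} {w : ZMod N} (h : e.plan t r = some (c, w)) :
    ∃ t', t < t' ∧ (e.cfg t').pos r = w ∧ (e.cfg t').light r = c := by
  obtain ⟨t₁, ht₁, -, hnone⟩ := e.fair r t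
  have key : ∀ s, t ≤ s → e.plan s r = some (c, w) ∨
      ∃ t', t < t' ∧ (e.cfg t').pos r = w ∧ (e.cfg t').light r = c := by
    intro s hs
    induction s, hs using Nat.le_induction with
    | base => exact .inl h
    | succ s hs ih =>
      rcases ih with ih | ih
      · exact (e.plan_succ_or_move ih).imp_right fun hm => ⟨s + 1, by omega, hm⟩
      · exact .inr ih
  simpa [hnone] using key (t₁ + 1) (by omega)

lemma exists_look (t : ℕ) (r : Fin R) :
    ∃ s, t ≤ s ∧ ∃ dir, e.plan (s+1) r = some (lookResult A φ (e.cfg s) r dir) := by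
  obtain ⟨t₁, ht₁, -, hnone⟩ := e.fair r t
  obtain ⟨t₂, ht₂, hsome, -⟩ := e.fair r (t₁ + 1)
  have key : ∀ b, t₁ + 1 ≤ b → e.plan b r ≠ none →
      ∃ s, t₁ + 1 ≤ s ∧ e.plan s r = none ∧ e.plan (s+1) r ≠ none := by
    intro b hb
    induction b, hb using Nat.le_induction with
    | base => exact fun h => absurd hnone h
    | succ b hb ih =>
      intro hb'
      by_cases hb0 : e.plan b r = none
      · exact ⟨b, hb, hb0, hb'⟩
      · exact ih hb0
  obtain ⟨s, hs, hs0, hs1⟩ := key t₂ ht₂ hsome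
  refine ⟨s, by omega, ?_⟩
  rcases e.step_cases s r with ⟨-, -, h3⟩ | ⟨-, -, -, hlook⟩ | ⟨c, w, h0, -⟩ | ⟨-, -, -, -, -, h3⟩
  · exact absurd (h3.trans hs0) hs1
  · exact hlook
  · simp [hs0] at h0
  · exact absurd h3 hs1

end AsyncExec

def GathersAfter {N R φ : ℕ} {C : Type} {A : Algo C} (e : AsyncExec N R C φ A) (t₀ : ℕ) : Prop :=
  ∃ (t₁ : ℕ) (u : ZMod N), t₀ ≤ t₁ ∧ ∀ t', t₁ ≤ t' → ∀ r, (e.cfg t').pos r = u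

lemma GathersAfter.mono {N R φ : ℕ} {C : Type} {A : Algo C} {e : AsyncExec N R C φ A}
    {t₀ t₁ : ℕ} (h : GathersAfter e t₁) (ht : t₀ ≤ t₁) : GathersAfter e t₀ := by
  obtain ⟨t₂, u, ht₂, hu⟩ := h
  exact ⟨t₂, u, ht.trans ht₂, hu⟩

/-- `v` is at distance `1` on one side of `u` and `N - 1` on the other, so `φ + 1 ≥ N` would put
it on the empty side of the border node `u`. -/
lemma add_two_le_of_isBorderNode {N R φ : ℕ} {C : Type} {cfg : Config N R C} (hN : 2 ≤ N)
    {u v : ZMod N} (hadj : v = u + 1 ∨ v = u - 1) (hu : isBorderNode φ cfg u)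
    (hv : occupiedNode cfg v) :
    φ + 2 ≤ N := by
  obtain ⟨-, dir, hempty, -⟩ := hu
  by_contra hlt
  have h1 := hempty 1 le_rfl (by omega)
  have h2 := hempty ((N : ℤ) - 1) (by omega) (by omega)
  rcases hadj with rfl | rfl <;> cases dir <;> simp_all [sub_eq_add_neg]

structure AdjNodes {N : ℕ} (φ : ℕ) (x y : ZMod N) : Prop where
  one_le : 1 ≤ φ
  add_two_le : φ + 2 ≤ N
  adj : y = x + 1 ∨ y = x - 1

lemma AdjNodes.symm {N φ : ℕ} {x y : ZMod N} (h : AdjNodes φ x y) : AdjNodes φ y x :=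
  ⟨h.one_le, h.add_two_le, by rcases h.adj with rfl | rfl <;> simp⟩

lemma AdjNodes.ne {N φ : ℕ} {x y : ZMod N} (h : AdjNodes φ x y) : x ≠ y := by
  have h1 : ((1 : ℤ) : ZMod N) ≠ ((0 : ℤ) : ZMod N) := by
    rw [Ne, intCast_eq_intCast_iff_of_abs_sub_lt (by have := h.add_two_le; simp; omega)]
    exact one_ne_zero
  rcases h.adj with rfl | rfl
  · simpa using h1
  · simpa [eq_comm (a := x)] using h1

section AdjView

variable {C : Type} (S T : Set C)

@[simp] lemma adjView_zero : adjView S T 0 = S := rfl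

@[simp] lemma adjView_one : adjView S T 1 = T := rfl

lemma adjView_of_two_le {k : ℤ} (hk : 2 ≤ k) : adjView S T k = ∅ := by
  simp [adjView, show k ≠ 0 by omega, show k ≠ 1 by omega]

lemma adjView_neg {k : ℤ} (hk : 1 ≤ k) : adjView S T (-k) = ∅ := by
  simp [adjView, show -k ≠ 0 by omega, show -k ≠ 1 by omega]

end AdjView

section Algo1

lemma algo1_out_neg (φ : ℕ) (c : C3) (w : ℤ → Set C3) :
    (algo1 φ).out c (fun k => w (-k)) = (((algo1 φ).out c w).1, -((algo1 φ).out c w).2) := by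
  simp only [algo1, neg_neg]
  split_ifs <;> simp_all

lemma lookResult_algo1_eq_true {N R φ : ℕ} (cfg : Config N R C3) (r : Fin R) (dir : Bool) :
    lookResult (algo1 φ) φ cfg r dir = lookResult (algo1 φ) φ cfg r true := by
  cases dir
  · simp only [lookResult, nodeView_false, algo1_out_neg, moveTarget_false, neg_neg]
  · rfl

variable {φ : ℕ} {S T : Set C3}

lemma algo1_out_adjView_empty (c : C3) : (algo1 φ).out c (adjView S ∅) = (c, 0) := by
  have hpos : ∀ k : ℤ, 1 ≤ k → adjView S ∅ k = ∅ := fun k hk => by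
    rcases hk.eq_or_lt with rfl | hk
    · rfl
    · exact adjView_of_two_le S ∅ hk
  have hneg : ∀ k : ℤ, 1 ≤ k → k ≤ φ → adjView S ∅ (-k) = ∅ := fun k hk _ => adjView_neg S ∅ hk
  simp only [algo1]
  rw [if_pos ⟨hneg, fun k hk _ => hpos k hk⟩]

lemma algo1_out_adjView (hφ : 1 ≤ φ) (hT : T ≠ ∅) (c : C3) :
    (algo1 φ).out c (adjView S T) = algo1Rules φ c (adjView S T) := by
  have : ¬ ∀ k : ℤ, 1 ≤ k → k ≤ φ → adjView S T k = ∅ := fun h => hT (h 1 le_rfl (by omega))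
  have hneg : ∀ k : ℤ, 1 ≤ k → k ≤ φ → adjView S T (-k) = ∅ := fun k hk _ => adjView_neg S T hk
  simp only [algo1]
  rw [if_neg (fun h => this h.2), if_pos hneg]

lemma algo1Rules_adjView_white (hW : C3.White ∈ S) (hB : C3.Blue ∉ S) :
    algo1Rules φ C3.White (adjView S T) = (C3.Red, 0) := by
  have hS : S = {C3.White} ∨ C3.Red ∈ S := by
    refine or_iff_not_imp_right.mpr fun hR => Set.eq_singleton_iff_unique_mem.mpr ⟨hW, ?_⟩
    rintro (_ | _ | _) h <;> trivial
  simp only [algo1Rules]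
  split_ifs <;> simp_all

lemma algo1Rules_adjView_red (hW : C3.White ∉ T) :
    algo1Rules φ C3.Red (adjView S T) =
      if S = {C3.Red} ∧ T = {C3.Blue} then (C3.Blue, 1) else (C3.Red, 0) := by
  have hfar : ∀ k : ℤ, 2 ≤ k → k ≤ φ → adjView S T k = ∅ := fun k hk _ => adjView_of_two_le S T hk
  simp [algo1Rules, eq_true hfar, hW]

open Classical in
lemma algo1Rules_adjView_blue (hφ : 1 ≤ φ) :
    algo1Rules φ C3.Blue (adjView S T) =
      if S = {C3.Blue} ∧ C3.White ∈ T ∧ φ = 1 then (C3.Red, 1) else (C3.Blue, 0) := by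
  have hfar : ∀ k : ℤ, 2 ≤ k → k ≤ φ → adjView S T k = ∅ := fun k hk _ => adjView_of_two_le S T hk
  have hφ1 : (∀ k : ℤ, 2 ≤ k → k ≤ φ → ¬ adjView S T k = ∅) ↔ φ = 1 :=
    ⟨fun h => by_contra fun hne => h 2 le_rfl (by omega) (hfar 2 le_rfl (by omega)),
      fun h k hk hkφ => by omega⟩
  simp [algo1Rules, eq_true hfar, hφ1]

end Algo1

section Look

variable {N R φ : ℕ} {x y : ZMod N} {cfg : Config N R C3} {r : Fin R}

lemma lookResult_algo1_adj (h : AdjNodes φ x y) (hocc : ∀ z, occupiedNode cfg z → z = x ∨ z = y)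
    (hr : cfg.pos r = x) (dir : Bool) :
    lookResult (algo1 φ) φ cfg r dir =
      (((algo1 φ).out (cfg.light r) (adjView (colorsAt cfg x) (colorsAt cfg y))).1,
        x + ((((algo1 φ).out (cfg.light r)
          (adjView (colorsAt cfg x) (colorsAt cfg y))).2 : ℤ) : ZMod N) * (y - x)) := by
  obtain ⟨d, rfl⟩ : ∃ d : Bool, y = x + dirUnit d := by
    rcases h.adj with rfl | rfl
    exacts [⟨true, rfl⟩, ⟨false, sub_eq_add_neg x 1⟩]
  rw [lookResult_algo1_eq_true, ← lookResult_algo1_eq_true cfg r d, lookResult, hr,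
    nodeView_eq_adjView h.one_le h.add_two_le d hocc, moveTarget_eq, add_sub_cancel_left]

lemma lookResult_of_not_occupied (h : AdjNodes φ x y)
    (hocc : ∀ z, occupiedNode cfg z → z = x ∨ z = y) (hr : cfg.pos r = x)
    (hy : ¬ occupiedNode cfg y) (dir : Bool) :
    lookResult (algo1 φ) φ cfg r dir = (cfg.light r, x) := by
  simp [lookResult_algo1_adj h hocc hr, colorsAt_eq_empty.mpr hy, algo1_out_adjView_empty]

lemma lookResult_white (h : AdjNodes φ x y) (hocc : ∀ z, occupiedNode cfg z → z = x ∨ z = y)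
    (hr : cfg.pos r = x) (hy : occupiedNode cfg y) (hl : cfg.light r = C3.White)
    (hB : C3.Blue ∉ colorsAt cfg x) (dir : Bool) :
    lookResult (algo1 φ) φ cfg r dir = (C3.Red, x) := by
  rw [lookResult_algo1_adj h hocc hr, hl,
    algo1_out_adjView h.one_le (colorsAt_ne_empty hy),
    algo1Rules_adjView_white (show C3.White ∈ colorsAt cfg x from ⟨r, hr, hl⟩) hB]
  simp

lemma lookResult_red (h : AdjNodes φ x y) (hocc : ∀ z, occupiedNode cfg z → z = x ∨ z = y)
    (hr : cfg.pos r = x) (hy : occupiedNode cfg y) (hl : cfg.light r = C3.Red)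
    (hW : C3.White ∉ colorsAt cfg y) (dir : Bool) :
    lookResult (algo1 φ) φ cfg r dir =
      if colorsAt cfg x = {C3.Red} ∧ colorsAt cfg y = {C3.Blue} then (C3.Blue, y)
      else (C3.Red, x) := by
  rw [lookResult_algo1_adj h hocc hr, hl,
    algo1_out_adjView h.one_le (colorsAt_ne_empty hy),
    algo1Rules_adjView_red hW]
  split_ifs <;> simp

open Classical in
lemma lookResult_blue (h : AdjNodes φ x y) (hocc : ∀ z, occupiedNode cfg z → z = x ∨ z = y)
    (hr : cfg.pos r = x) (hy : occupiedNode cfg y) (hl : cfg.light r = C3.Blue) (dir : Bool) :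
    lookResult (algo1 φ) φ cfg r dir =
      if colorsAt cfg x = {C3.Blue} ∧ C3.White ∈ colorsAt cfg y ∧ φ = 1 then (C3.Red, y)
      else (C3.Blue, x) := by
  rw [lookResult_algo1_adj h hocc hr, hl,
    algo1_out_adjView h.one_le (colorsAt_ne_empty hy),
    algo1Rules_adjView_blue h.one_le]
  split_ifs <;> simp

end Look

section Settled

variable {N R φ : ℕ} {e : AsyncExec N R C3 φ (algo1 φ)} {w : ZMod N} {t : ℕ}

def Settled (e : AsyncExec N R C3 φ (algo1 φ)) (w : ZMod N) (t : ℕ) : Prop :=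
  ∀ r, (e.cfg t).pos r = w ∧ ∀ c w', e.plan t r = some (c, w') → w' = w

lemma Settled.succ (hφ : 1 ≤ φ) (hφN : φ + 2 ≤ N) (hS : Settled e w t) : Settled e w (t+1) := by
  have h : AdjNodes φ w (w + 1) := ⟨hφ, hφN, .inl rfl⟩
  have hocc : ∀ z, occupiedNode (e.cfg t) z → z = w ∨ z = w + 1 := by
    rintro z ⟨r, rfl⟩
    exact .inl (hS r).1
  have hfree : ¬ occupiedNode (e.cfg t) (w + 1) := by
    rintro ⟨r, hr⟩
    exact h.ne ((hS r).1.symm.trans hr)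
  intro r
  rcases e.step_cases t r with ⟨h1, -, h3⟩ | ⟨-, h1, -, dir, h3⟩ | ⟨c, w', hpl, h1, -, h3⟩ |
    ⟨c, w', hpl, h1, -, h3⟩
  · exact ⟨h1 ▸ (hS r).1, h3 ▸ (hS r).2⟩
  · refine ⟨h1 ▸ (hS r).1, fun c w' hpl => ?_⟩
    rw [h3, lookResult_of_not_occupied h hocc (hS r).1 hfree] at hpl
    exact (Prod.ext_iff.mp (Option.some_inj.mp hpl)).2.symm
  · exact ⟨h1 ▸ (hS r).1, fun c₁ w₁ h' => (hS r).2 c₁ w₁ (hpl.trans (h3.symm.trans h'))⟩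
  · exact ⟨h1 ▸ (hS r).2 c w' hpl, by simp [h3]⟩

lemma Settled.gathersAfter (hφ : 1 ≤ φ) (hφN : φ + 2 ≤ N) (hS : Settled e w t) :
    GathersAfter e t := by
  refine ⟨t, w, le_rfl, fun t' ht' r => (?_ : Settled e w t') r |>.1⟩
  induction t', ht' using Nat.le_induction with
  | base => exact hS
  | succ t' _ ih => exact ih.succ hφ hφN

end Settled

section Endgame

variable {N R φ : ℕ}

def IsRWMBState (u v p : ZMod N) (l : C3) (pl : Option (C3 × ZMod N)) : Prop :=
  (p = u ∧ (l = C3.White ∧ (pl = none ∨ pl = some (C3.Red, u) ∨ pl = some (C3.White, u)) ∨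
            l = C3.Red ∧ (pl = none ∨ pl = some (C3.Red, u) ∨ pl = some (C3.Blue, v)) ∨
            l = C3.Blue ∧ pl = some (C3.Blue, v))) ∨
  (p = v ∧ (l = C3.Blue ∧ (pl = none ∨ pl = some (C3.Blue, v) ∨ pl = some (C3.Red, u)) ∨
            l = C3.Red ∧ pl = some (C3.Red, u)))

namespace IsRWMBState

variable {u v p w : ZMod N} {l c : C3} {pl : Option (C3 × ZMod N)}

lemma visible (h : IsRWMBState u v p l pl) (hpl : pl = some (c, w)) :
    IsRWMBState u v p c (some (c, w)) := by
  unfold IsRWMBState at *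
  aesop

lemma move (h : IsRWMBState u v p l pl) (hpl : pl = some (c, w)) : IsRWMBState u v w c none := by
  unfold IsRWMBState at *
  aesop

lemma light_of_plan_white (h : IsRWMBState u v p l pl) (hpl : pl = some (C3.White, w)) :
    l = C3.White := by
  unfold IsRWMBState at *
  aesop

lemma pos_of_white (h : IsRWMBState u v p l pl) (hl : l = C3.White) : p = u := by
  unfold IsRWMBState at *
  aesop

lemma plan_of_blue_at_u (huv : u ≠ v) (h : IsRWMBState u v p l pl) (hp : p = u)
    (hl : l = C3.Blue) : pl = some (C3.Blue, v) := by
  unfold IsRWMBState at *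
  aesop

lemma plan_of_red_at_v (huv : u ≠ v) (h : IsRWMBState u v p l pl) (hp : p = v)
    (hl : l = C3.Red) : pl = some (C3.Red, u) := by
  unfold IsRWMBState at *
  aesop

lemma target_of_at_u (h : IsRWMBState u v p l pl) (hp : p = u) (hpl : pl = some (c, w)) :
    w = u ∨ c = C3.Blue ∧ w = v := by
  unfold IsRWMBState at *
  aesop

lemma target_of_at_v (h : IsRWMBState u v p l pl) (hp : p = v) (hpl : pl = some (c, w)) :
    w = v ∨ c = C3.Red ∧ w = u := by
  unfold IsRWMBState at *
  aesop

lemma color_of_plan_at_v (huv : u ≠ v) (h : IsRWMBState u v p l pl) (hp : p = v)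
    (hpl : pl = some (c, u)) : c = C3.Red := by
  unfold IsRWMBState at *
  aesop

end IsRWMBState

/-- The second clause holds because R5 fires only when all robots on `u` are Red, and no robot
ever turns White again. -/
def RWMBInvariant (e : AsyncExec N R C3 φ (algo1 φ)) (u v : ZMod N) (t : ℕ) : Prop :=
  (∀ r, IsRWMBState u v ((e.cfg t).pos r) ((e.cfg t).light r) (e.plan t r)) ∧
  ((∃ r, (e.cfg t).pos r = u ∧ e.plan t r = some (C3.Blue, v)) →
    ∀ r, (e.cfg t).light r ≠ C3.White)

def outdated (e : AsyncExec N R C3 φ (algo1 φ)) (u v : ZMod N) (t : ℕ) : Set (Fin R) :=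
  {r | (e.cfg t).pos r = v ∧ e.plan t r = some (C3.Red, u)}

variable {e : AsyncExec N R C3 φ (algo1 φ)} {u v : ZMod N} {t t₀ : ℕ} {r : Fin R}

namespace RWMBInvariant

lemma occupied (hI : RWMBInvariant e u v t) {z : ZMod N} (hz : occupiedNode (e.cfg t) z) :
    z = u ∨ z = v := by
  obtain ⟨r, rfl⟩ := hz
  rcases hI.1 r with ⟨hp, -⟩ | ⟨hp, -⟩
  exacts [.inl hp, .inr hp]

lemma white_notMem_v (huv : u ≠ v) (hI : RWMBInvariant e u v t) :
    C3.White ∉ colorsAt (e.cfg t) v := by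
  rintro ⟨r, hp, hl⟩
  exact huv (((hI.1 r).pos_of_white hl).symm.trans hp)

lemma blue_notMem_u_of_white (huv : u ≠ v) (hI : RWMBInvariant e u v t)
    (hl : (e.cfg t).light r = C3.White) : C3.Blue ∉ colorsAt (e.cfg t) u := by
  rintro ⟨r', hp, hb⟩
  exact hI.2 ⟨r', hp, (hI.1 r').plan_of_blue_at_u huv hp hb⟩ r hl

lemma lookResult_at_u (h : AdjNodes φ u v) (hI : RWMBInvariant e u v t)
    (hr : (e.cfg t).pos r = u) (hpl : e.plan t r = none) (dir : Bool) :
    lookResult (algo1 φ) φ (e.cfg t) r dir = (C3.Red, u) ∨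
      lookResult (algo1 φ) φ (e.cfg t) r dir = ((e.cfg t).light r, u) ∨
      (e.cfg t).light r = C3.Red ∧ colorsAt (e.cfg t) u = {C3.Red} ∧
        lookResult (algo1 φ) φ (e.cfg t) r dir = (C3.Blue, v) := by
  have hocc : ∀ z, occupiedNode (e.cfg t) z → z = u ∨ z = v := fun z => hI.occupied
  by_cases hv : occupiedNode (e.cfg t) v
  swap
  · exact .inr (.inl (lookResult_of_not_occupied h hocc hr hv dir))
  rcases hI.1 r with ⟨-, ⟨hl, -⟩ | ⟨hl, -⟩ | ⟨-, hplB⟩⟩ | ⟨hp, -⟩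
  · exact .inl (lookResult_white h hocc hr hv hl (hI.blue_notMem_u_of_white h.ne hl) dir)
  · rw [lookResult_red h hocc hr hv hl (hI.white_notMem_v h.ne)]
    split_ifs with hc
    exacts [.inr (.inr ⟨hl, hc.1, rfl⟩), .inl rfl]
  · simp [hpl] at hplB
  · exact absurd (hr.symm.trans hp) h.ne

lemma lookResult_at_v (h : AdjNodes φ u v) (hI : RWMBInvariant e u v t)
    (hr : (e.cfg t).pos r = v) (hpl : e.plan t r = none) (dir : Bool) :
    lookResult (algo1 φ) φ (e.cfg t) r dir = (C3.Blue, v) ∨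
      C3.White ∈ colorsAt (e.cfg t) u ∧ lookResult (algo1 φ) φ (e.cfg t) r dir = (C3.Red, u) := by
  have hocc : ∀ z, occupiedNode (e.cfg t) z → z = v ∨ z = u := fun z hz => (hI.occupied hz).symm
  have hl : (e.cfg t).light r = C3.Blue := by
    rcases hI.1 r with ⟨hp, -⟩ | ⟨-, ⟨hl, -⟩ | ⟨-, hplR⟩⟩
    · exact absurd (hp.symm.trans hr) h.ne
    · exact hl
    · simp [hpl] at hplR
  by_cases hu : occupiedNode (e.cfg t) u
  · rw [lookResult_blue h.symm hocc hr hu hl]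
    split_ifs with hc
    exacts [.inr ⟨hc.2.1, rfl⟩, .inl rfl]
  · exact .inl (hl ▸ lookResult_of_not_occupied h.symm hocc hr hu dir)

lemma light_eq_white_of_succ (hI : RWMBInvariant e u v t)
    (hl : (e.cfg (t+1)).light r = C3.White) : (e.cfg t).light r = C3.White := by
  rcases e.step_cases t r with ⟨-, h2, -⟩ | ⟨-, -, h2, -⟩ | ⟨c, w, hpl, -, h2, -⟩ |
    ⟨c, w, hpl, -, h2, -⟩
  · exact h2 ▸ hl
  · exact h2 ▸ hl
  · exact (hI.1 r).light_of_plan_white (hpl.trans (by rw [← h2, hl]))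
  · exact (hI.1 r).light_of_plan_white (hpl.trans (by rw [← h2, hl]))

lemma isRWMBState_look (h : AdjNodes φ u v) (hI : RWMBInvariant e u v t)
    (hpl : e.plan t r = none) (dir : Bool) :
    IsRWMBState u v ((e.cfg t).pos r) ((e.cfg t).light r)
      (some (lookResult (algo1 φ) φ (e.cfg t) r dir)) := by
  have hs := hI.1 r
  have huv := h.ne
  rw [hpl] at hs
  rcases hI.occupied ⟨r, rfl⟩ with hp | hp
  · rcases hI.lookResult_at_u h hp hpl dir with h4 | h4 | ⟨hl, -, h4⟩ <;> rw [h4] <;>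
      unfold IsRWMBState at * <;> aesop
  · rcases hI.lookResult_at_v h hp hpl dir with h4 | ⟨-, h4⟩ <;> rw [h4] <;>
      unfold IsRWMBState at * <;> aesop

lemma succ (h : AdjNodes φ u v) (hI : RWMBInvariant e u v t) : RWMBInvariant e u v (t+1) := by
  refine ⟨fun r => ?_, ?_⟩
  · rcases e.step_cases t r with ⟨h1, h2, h3⟩ | ⟨h0, h1, h2, dir, h3⟩ |
      ⟨c, w, hpl, h1, h2, h3⟩ | ⟨c, w, hpl, h1, h2, h3⟩ <;> rw [h1, h2, h3]
    · exact hI.1 r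
    · exact hI.isRWMBState_look h h0 dir
    · exact (hI.1 r).visible hpl
    · exact (hI.1 r).move hpl
  · rintro ⟨r₁, hp₁, hpl₁⟩ r₂ hl₂
    have hl₂' := hI.light_eq_white_of_succ hl₂
    have hW : ∀ r, (e.cfg t).pos r = u → e.plan t r ≠ some (C3.Blue, v) :=
      fun r hp hpl => hI.2 ⟨r, hp, hpl⟩ r₂ hl₂'
    rcases e.step_cases t r₁ with ⟨h1, -, h3⟩ | ⟨h0, h1, -, dir, h3⟩ |
      ⟨c, w, hpl, h1, -, h3⟩ | ⟨-, -, -, -, -, h3⟩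
    · exact hW r₁ (h1 ▸ hp₁) (h3 ▸ hpl₁)
    · rw [hpl₁, Option.some_inj] at h3
      rcases hI.lookResult_at_u h (h1 ▸ hp₁) h0 dir with h4 | h4 | ⟨-, hc, h4⟩ <;>
        rw [← h3] at h4
      · simp at h4
      · exact h.ne (Prod.ext_iff.mp h4).2.symm
      · have : C3.White ∈ colorsAt (e.cfg t) u :=
          ⟨r₂, (hI.1 r₂).pos_of_white hl₂', hl₂'⟩
        simp [hc] at this
    · exact hW r₁ (h1 ▸ hp₁) (hpl.trans (h3.symm.trans hpl₁))
    · simp [h3] at hpl₁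

lemma settled_u (hI : RWMBInvariant e u v t) (hv : ¬ occupiedNode (e.cfg t) v)
    (hB : ∀ r, (e.cfg t).pos r = u → e.plan t r ≠ some (C3.Blue, v)) : Settled e u t := by
  intro r
  have hp : (e.cfg t).pos r = u := (hI.occupied ⟨r, rfl⟩).resolve_right fun h => hv ⟨r, h⟩
  refine ⟨hp, fun c w hpl => ?_⟩
  rcases (hI.1 r).target_of_at_u hp hpl with hw | ⟨rfl, rfl⟩
  exacts [hw, absurd hpl (hB r hp)]

lemma settled_v (hI : RWMBInvariant e u v t) (hu : ¬ occupiedNode (e.cfg t) u)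
    (hO : outdated e u v t = ∅) : Settled e v t := by
  intro r
  have hp : (e.cfg t).pos r = v := (hI.occupied ⟨r, rfl⟩).resolve_left fun h => hu ⟨r, h⟩
  refine ⟨hp, fun c w hpl => ?_⟩
  rcases (hI.1 r).target_of_at_v hp hpl with hw | ⟨rfl, rfl⟩
  · exact hw
  · exact (hO.subset ⟨hp, hpl⟩).elim

lemma outdated_succ_subset (h : AdjNodes φ u v) (hI : RWMBInvariant e u v t)
    (hW : ∀ r, (e.cfg t).light r ≠ C3.White) : outdated e u v (t+1) ⊆ outdated e u v t := by
  rintro r ⟨hp, hpl⟩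
  rcases e.step_cases t r with ⟨h1, -, h3⟩ | ⟨h0, h1, -, dir, h3⟩ | ⟨c, w, hpl', h1, -, h3⟩ |
    ⟨-, -, -, -, -, h3⟩
  · exact ⟨h1 ▸ hp, h3 ▸ hpl⟩
  · rw [hpl, Option.some_inj] at h3
    rcases hI.lookResult_at_v h (h1 ▸ hp) h0 dir with h4 | ⟨⟨r', -, hl⟩, -⟩
    · simp [← h3] at h4
    · exact absurd hl (hW r')
  · exact ⟨h1 ▸ hp, hpl'.trans (h3.symm.trans hpl)⟩
  · simp [h3] at hpl

lemma pos_eq_u_of_succ (h : AdjNodes φ u v) (hI : RWMBInvariant e u v t)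
    (hO : outdated e u v t = ∅) (hp : (e.cfg (t+1)).pos r = u) :
    (e.cfg t).pos r = u := by
  rcases e.step_cases t r with ⟨h1, -⟩ | ⟨-, h1, -⟩ | ⟨-, -, -, h1, -⟩ | ⟨c, w, hpl, h1, -⟩
  · exact h1 ▸ hp
  · exact h1 ▸ hp
  · exact h1 ▸ hp
  · rw [h1] at hp
    subst hp
    refine (hI.occupied ⟨r, rfl⟩).resolve_right fun hv => ?_
    have hc := (hI.1 r).color_of_plan_at_v h.ne hv hpl
    subst hc
    exact (hO.subset ⟨hv, hpl⟩).elim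

lemma light_eq_red_of_at_u (h : AdjNodes φ u v) (hI : RWMBInvariant e u v t)
    (hW : (e.cfg t).light r ≠ C3.White) (hB : e.plan t r ≠ some (C3.Blue, v))
    (hp : (e.cfg t).pos r = u) : (e.cfg t).light r = C3.Red := by
  cases hl : (e.cfg t).light r
  · exact absurd hl hW
  · rfl
  · exact absurd ((hI.1 r).plan_of_blue_at_u h.ne hp hl) hB

lemma light_eq_blue_of_at_v (h : AdjNodes φ u v) (hI : RWMBInvariant e u v t)
    (hO : outdated e u v t = ∅) (hp : (e.cfg t).pos r = v) : (e.cfg t).light r = C3.Blue := by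
  cases hl : (e.cfg t).light r
  · exact absurd ((hI.1 r).pos_of_white hl) fun hu => h.ne (hu.symm.trans hp)
  · exact (hO.subset ⟨hp, (hI.1 r).plan_of_red_at_v h.ne hp hl⟩).elim
  · rfl

end RWMBInvariant

lemma exists_adjNodes_rwmbInvariant (hN : 3 ≤ N) (hφ : 1 ≤ φ) (hconf : ConfRWMB e t) :
    ∃ u v, AdjNodes φ u v ∧ RWMBInvariant e u v t := by
  obtain ⟨u, v, hadj, hu, hv, hocc, hU, -, hV, -⟩ := hconf
  have h : AdjNodes φ u v := ⟨hφ, add_two_le_of_isBorderNode (by omega) hadj hu hv.1, hadj⟩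
  refine ⟨u, v, h, fun r => ?_, fun ⟨r, hp, hpl⟩ => by simp [(hU r hp).2] at hpl⟩
  rcases hocc _ ⟨r, rfl⟩ with hp | hp
  · obtain ⟨hl | hl, hpl⟩ := hU r hp <;> simp [IsRWMBState, hp, hl, hpl]
  · obtain ⟨hl, hpl | hpl, hnone⟩ := hV r hp
    · simp [IsRWMBState, hp, hnone hpl, hpl, h.ne.symm]
    · rcases hl with hl | hl <;> simp [IsRWMBState, hp, hl, hpl, h.ne.symm]

lemma eventually_no_white_or_gathersAfter (h : AdjNodes φ u v)
    (hI : ∀ t, t₀ ≤ t → RWMBInvariant e u v t) :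
    (∃ T, t₀ ≤ T ∧ ∀ t, T ≤ t → ∀ r, (e.cfg t).light r ≠ C3.White) ∨ GathersAfter e t₀ := by
  obtain ⟨T, hT, hconst⟩ := exists_forall_ge_eq_of_succ_subset
    (S := fun t => {r | (e.cfg t).light r = C3.White})
    fun t ht r hr => (hI t ht).light_eq_white_of_succ hr
  rcases em (∃ r, (e.cfg T).light r = C3.White) with ⟨r, hr⟩ | hnone
  swap
  · exact .inl ⟨T, hT, fun t ht r hr => hnone ⟨r, (Set.ext_iff.mp (hconst t ht) r).mp hr⟩⟩
  have hwhite : ∀ t, T ≤ t → (e.cfg t).light r = C3.White :=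
    fun t ht => (Set.ext_iff.mp (hconst t ht) r).mpr hr
  obtain ⟨s, hs, dir, hlook⟩ := e.exists_look T r
  have hIs := hI s (by omega)
  have hrs : (e.cfg s).pos r = u := (hIs.1 r).pos_of_white (hwhite s hs)
  by_cases hv : occupiedNode (e.cfg s) v
  · rw [lookResult_white h (fun z => hIs.occupied) hrs hv (hwhite s hs)
      (hIs.blue_notMem_u_of_white h.ne (hwhite s hs))] at hlook
    obtain ⟨t', ht', -, hred⟩ := e.exists_move hlook
    simp [hwhite t' (by omega)] at hred
  · exact .inr ((hIs.settled_u hv fun r' hp' hpl => hIs.2 ⟨r', hp', hpl⟩ r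
      (hwhite s hs)).gathersAfter h.one_le h.add_two_le |>.mono (by omega))

lemma eventually_outdated_eq_empty (h : AdjNodes φ u v)
    (hI : ∀ t, t₀ ≤ t → RWMBInvariant e u v t)
    (hW : ∀ t, t₀ ≤ t → ∀ r, (e.cfg t).light r ≠ C3.White) :
    ∃ T, t₀ ≤ T ∧ ∀ t, T ≤ t → outdated e u v t = ∅ := by
  obtain ⟨T, hT, hconst⟩ := exists_forall_ge_eq_of_succ_subset
    fun t ht => (hI t ht).outdated_succ_subset h (hW t ht)
  refine ⟨T, hT, fun t ht => (hconst t ht).trans ?_⟩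
  refine Set.eq_empty_of_forall_notMem fun r ⟨hp, hpl⟩ => ?_
  obtain ⟨t', ht', hu, -⟩ := e.exists_move hpl
  exact h.ne (hu.symm.trans ((Set.ext_iff.mp (hconst t' (by omega)) r).mpr ⟨hp, hpl⟩).1)

lemma gathersAfter_of_no_white_of_outdated_eq_empty (h : AdjNodes φ u v)
    (hI : ∀ t, t₀ ≤ t → RWMBInvariant e u v t)
    (hW : ∀ t, t₀ ≤ t → ∀ r, (e.cfg t).light r ≠ C3.White)
    (hO : ∀ t, t₀ ≤ t → outdated e u v t = ∅) : GathersAfter e t₀ := by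
  obtain ⟨T, hT, hconst⟩ := exists_forall_ge_eq_of_succ_subset
    (S := fun t => {r | (e.cfg t).pos r = u})
    fun t ht r hr => (hI t ht).pos_eq_u_of_succ h (hO t ht) hr
  have hstay : ∀ t, T ≤ t → ∀ r, (e.cfg t).pos r = u ↔ (e.cfg T).pos r = u :=
    fun t ht r => Set.ext_iff.mp (hconst t ht) r
  have hnoB : ∀ t, T ≤ t → ∀ r, (e.cfg t).pos r = u → e.plan t r ≠ some (C3.Blue, v) := by
    intro t ht r hp hpl
    obtain ⟨t', ht', hv, -⟩ := e.exists_move hpl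
    exact h.ne (((hstay t' (by omega) r).mpr ((hstay t ht r).mp hp)).symm.trans hv)
  rcases em (occupiedNode (e.cfg T) u) with ⟨r₀, hr₀⟩ | hu
  swap
  · exact ((hI T hT).settled_v hu (hO T hT)).gathersAfter h.one_le h.add_two_le |>.mono hT
  obtain ⟨s, hs, dir, hlook⟩ := e.exists_look T r₀
  have hIs := hI s (by omega)
  have hr₀s : (e.cfg s).pos r₀ = u := (hstay s hs r₀).mpr hr₀
  by_cases hv : occupiedNode (e.cfg s) v
  swap
  · exact (hIs.settled_u hv (hnoB s hs)).gathersAfter h.one_le h.add_two_le |>.mono (by omega)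
  have hred : ∀ r, (e.cfg s).pos r = u → (e.cfg s).light r = C3.Red :=
    fun r hp => hIs.light_eq_red_of_at_u h (hW s (by omega) r) (hnoB s hs r hp) hp
  have hblue : ∀ r, (e.cfg s).pos r = v → (e.cfg s).light r = C3.Blue :=
    fun r hp => hIs.light_eq_blue_of_at_v h (hO s (by omega)) hp
  rw [lookResult_red h (fun z => hIs.occupied) hr₀s hv (hred r₀ hr₀s) (hIs.white_notMem_v h.ne),
    if_pos ⟨colorsAt_eq_singleton ⟨r₀, hr₀s⟩ hred, colorsAt_eq_singleton hv hblue⟩] at hlook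
  exact (hnoB (s + 1) (by omega) r₀ ((hstay _ (by omega) r₀).mpr hr₀) hlook).elim

end Endgame

theorem algo1_gathers_from_RWMB_general
    (N R phi : ℕ) (hN : 3 ≤ N) (hphi : 1 ≤ phi)
    (e : AsyncExec N R C3 phi (algo1 phi))
    (t0 : ℕ) (hconf : ConfRWMB e t0) :
    ∃ (t1 : ℕ) (u : ZMod N), t0 ≤ t1 ∧
      ∀ t', t1 ≤ t' → ∀ r, (e.cfg t').pos r = u := by
  obtain ⟨u, v, h, hI₀⟩ := exists_adjNodes_rwmbInvariant hN hphi hconf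
  have hI : ∀ t, t0 ≤ t → RWMBInvariant e u v t := fun t ht => by
    induction t, ht using Nat.le_induction with
    | base => exact hI₀
    | succ t _ ih => exact ih.succ h
  rcases eventually_no_white_or_gathersAfter h hI with ⟨T₁, hT₁, hW⟩ | hgathers
  · obtain ⟨T₂, hT₂, hO⟩ := eventually_outdated_eq_empty h (fun t ht => hI t (by omega)) hW
    exact (gathersAfter_of_no_white_of_outdated_eq_empty h (fun t ht => hI t (by omega))
      (fun t ht => hW t (by omega)) hO).mono (by omega)
  · exact hgathers

/-- **Lemma 8.** Under Algorithm 1, from configuration `Conf RW-MB` the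
execution achieves gathering: all robots eventually occupy a single node and
remain there forever. -/
theorem algo1_gathers_from_RWMB
    (N R phi Minit Oinit : ℕ) (hN : 3 ≤ N) (hphi : 1 ≤ phi) (hM : Odd Minit)
    (e : AsyncExec N R C3 phi (algo1 phi))
    (hInit : AdmissibleInit phi (e.cfg 0) C3.White Minit Oinit)
    (t0 : ℕ) (hconf : ConfRWMB e t0) :
    ∃ (t1 : ℕ) (u : ZMod N), t0 ≤ t1 ∧
      ∀ t', t1 ≤ t' → ∀ r, (e.cfg t').pos r = u :=
  algo1_gathers_from_RWMB_general N R phi hN hphi e t0 hconf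

end Gathering
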